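/- For any i, j, l, m ∈ ℤ≥0 and real coefficients a^k_{l,m}, b^k_{l,m}, a^k_{i,j}, b^k_{i,j} (k = 1,2), the Lie bracket of the vector fields U = Σ_k (a^k_{l,m} P^k_{l,m} + b^k_{l,m} R^k_{l,m}) and W = Σ_k (a^k_{i,j} P^k_{i,j} + b^k_{i,j} R^k_{i,j}) satisfies (1/2)[U, W] = Σ_k ((i a¹_{l,m} + j a²_{l,m}) a^k_{i,j} − (l a¹_{i,j} + m a²_{i,j}) a^k_{l,m}) P^k_{i+l, j+m} + Σ_k ((i a¹_{l,m} + j a²_{l,m}) b^k_{i,j} − (l a¹_{i,j} + m a²_{i,j}) b^k_{l,m}) R^k_{i+l, j+m}. -/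

import Mathlib

open MvPolynomial

/-- Polynomials on ℂ⁴ with coordinates (z₁, w₁, z₂, w₂). -/
abbrev Poly4 : Type := MvPolynomial (Fin 4) ℂ

/-- Polynomial vector fields on ℂ⁴, identified with their component polynomials. -/
abbrev VF : Type := Fin 4 → Poly4

/-- Action of a vector field on a polynomial (as a derivation). -/
noncomputable def vAct (v : VF) (p : Poly4) : Poly4 := ∑ i, v i * pderiv i p

/-- Lie bracket of vector fields, [v,w] = vw − wv as differential operators. -/
noncomputable def vBr (v w : VF) : VF := fun k => vAct v (w k) - vAct w (v k)

/-- The monomial (z₁w₁)^m (z₂w₂)^n, i.e. |z₁|^{2m}|z₂|^{2n}. -/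
noncomputable def mon (m n : ℕ) : Poly4 := (X 0 * X 1) ^ m * (X 2 * X 3) ^ n

/-- Planar-radial vector field P¹_{m,n} = (z₁w₁)^m (z₂w₂)^n (z₁ ∂/∂z₁ + w₁ ∂/∂w₁). -/
noncomputable def P1 (m n : ℕ) : VF := fun k => mon m n * ![X 0, X 1, 0, 0] k

/-- Planar-radial vector field P²_{m,n} = (z₁w₁)^m (z₂w₂)^n (z₂ ∂/∂z₂ + w₂ ∂/∂w₂). -/
noncomputable def P2 (m n : ℕ) : VF := fun k => mon m n * ![0, 0, X 2, X 3] k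

/-- Planar-rotating vector field R¹_{m,n} = (z₁w₁)^m (z₂w₂)^n (I z₁ ∂/∂z₁ − I w₁ ∂/∂w₁). -/
noncomputable def R1 (m n : ℕ) : VF :=
  fun k => mon m n * ![C Complex.I * X 0, -(C Complex.I) * X 1, 0, 0] k

/-- Planar-rotating vector field R²_{m,n} = (z₁w₁)^m (z₂w₂)^n (I z₂ ∂/∂z₂ − I w₂ ∂/∂w₂). -/
noncomputable def R2 (m n : ℕ) : VF :=
  fun k => mon m n * ![0, 0, C Complex.I * X 2, -(C Complex.I) * X 3] k

/-!
Every field `a¹P¹ + a²P² + b¹R¹ + b²R²` with coefficient `f = (z₁w₁)^m (z₂w₂)^n` is `f · E_c`,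
where `E_c = Σₖ cₖ xₖ ∂/∂xₖ` is diagonal with `c = (a¹ + I b¹, a¹ - I b¹, a² + I b², a² - I b²)`.
Diagonal linear fields commute, so `[f E_c, g E_d] = (f E_c g) E_d - (g E_d f) E_c`, and `E_c`
multiplies `(z₁w₁)^i (z₂w₂)^j` by `i (c₀ + c₁) + j (c₂ + c₃) = 2 (i a¹ + j a²)`: this is the
factor `2`.
-/

lemma vAct_mul (v : VF) (p q : Poly4) : vAct v (p * q) = vAct v p * q + p * vAct v q := by
  simp only [vAct, Derivation.leibniz, smul_eq_mul, Finset.sum_mul, Finset.mul_sum,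
    ← Finset.sum_add_distrib]
  exact Finset.sum_congr rfl fun _ _ => by ring

lemma vAct_C_mul_X (v : VF) (a : ℂ) (k : Fin 4) : vAct v (C a * X k) = C a * v k := by
  fin_cases k <;> simp [vAct, Fin.sum_univ_four, pderiv_X] <;> ring

noncomputable def diag (c : Fin 4 → ℂ) (f : Poly4) : VF := fun k => f * (C (c k) * X k)

lemma vAct_diag_monomial (c : Fin 4 → ℂ) (f : Poly4) (s : Fin 4 →₀ ℕ) (a : ℂ) :
    vAct (diag c f) (monomial s a) = C (∑ k, c k * s k) * (f * monomial s a) := by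
  simp only [vAct, diag, map_sum, Finset.sum_mul]
  refine Finset.sum_congr rfl fun k _ => ?_
  rw [mul_assoc, mul_assoc, X_mul_pderiv_monomial, nsmul_eq_mul, map_mul, map_natCast]
  ring

lemma vBr_diag (c d : Fin 4 → ℂ) (f g : Poly4) :
    vBr (diag c f) (diag d g) = diag d (vAct (diag c f) g) - diag c (vAct (diag d g) f) := by
  funext k
  simp only [vBr, Pi.sub_apply, diag]
  rw [vAct_mul, vAct_C_mul_X, vAct_mul, vAct_C_mul_X]
  simp only [diag]
  ring

lemma mon_eq_monomial (i j : ℕ) :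
    mon i j = monomial ((.single 0 i + .single 1 i) + (.single 2 j + .single 3 j)) 1 := by
  simp only [mon, mul_pow, X_pow_eq_monomial, monomial_mul, mul_one]

lemma mon_mul_mon (i j l m : ℕ) : mon l m * mon i j = mon (i + l) (j + m) := by
  simp only [mon, pow_add]; ring

lemma vAct_diag_mon (c : Fin 4 → ℂ) (i j l m : ℕ) :
    vAct (diag c (mon l m)) (mon i j)
      = C (i * (c 0 + c 1) + j * (c 2 + c 3)) * mon (i + l) (j + m) := by
  rw [← mon_mul_mon, mon_eq_monomial i j, vAct_diag_monomial]
  congr 2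
  simp [Fin.sum_univ_four, Finsupp.single_apply]
  ring

lemma vBr_diag_mon (c d : Fin 4 → ℂ) (i j l m : ℕ) :
    vBr (diag c (mon l m)) (diag d (mon i j))
      = diag (fun k => (i * (c 0 + c 1) + j * (c 2 + c 3)) * d k
          - (l * (d 0 + d 1) + m * (d 2 + d 3)) * c k) (mon (i + l) (j + m)) := by
  rw [vBr_diag, vAct_diag_mon, vAct_diag_mon, Nat.add_comm l, Nat.add_comm m]
  funext k
  simp only [diag, Pi.sub_apply, map_sub, map_mul]
  ring

lemma real_smul_eq_C_mul (r : ℝ) (p : Poly4) : r • p = C (r : ℂ) * p := by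
  rw [← algebraMap_smul ℂ r p, smul_eq_C_mul, Complex.coe_algebraMap]

lemma real_smul_diag (r : ℝ) (c : Fin 4 → ℂ) (f : Poly4) :
    r • diag c f = diag (fun k => r * c k) f := by
  funext k
  simp only [diag, Pi.smul_apply, real_smul_eq_C_mul, map_mul]
  ring

lemma smul_P_add_smul_R_eq_diag (a1 a2 b1 b2 : ℝ) (m n : ℕ) :
    a1 • P1 m n + a2 • P2 m n + b1 • R1 m n + b2 • R2 m n
      = diag ![a1 + Complex.I * b1, a1 - Complex.I * b1,
          a2 + Complex.I * b2, a2 - Complex.I * b2] (mon m n) := by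
  funext k
  fin_cases k <;>
  · simp [P1, P2, R1, R2, diag, real_smul_eq_C_mul, -smul_eq_mul]
    ring

/-- The general structure-constant identity for the bracket of two grade-homogeneous
elements U = Σ_k (a^k_{l,m} P^k_{l,m} + b^k_{l,m} R^k_{l,m}) and
W = Σ_k (a^k_{i,j} P^k_{i,j} + b^k_{i,j} R^k_{i,j}). -/
theorem structure_constants_general (i j l m : ℕ)
    (a1lm a2lm b1lm b2lm a1ij a2ij b1ij b2ij : ℝ) :
    vBr (a1lm • P1 l m + a2lm • P2 l m + b1lm • R1 l m + b2lm • R2 l m)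
        (a1ij • P1 i j + a2ij • P2 i j + b1ij • R1 i j + b2ij • R2 i j)
      = (2:ℝ) •
        ( (((i:ℝ) * a1lm + (j:ℝ) * a2lm) * a1ij - ((l:ℝ) * a1ij + (m:ℝ) * a2ij) * a1lm)
            • P1 (i+l) (j+m)
        + (((i:ℝ) * a1lm + (j:ℝ) * a2lm) * a2ij - ((l:ℝ) * a1ij + (m:ℝ) * a2ij) * a2lm)
            • P2 (i+l) (j+m)
        + (((i:ℝ) * a1lm + (j:ℝ) * a2lm) * b1ij - ((l:ℝ) * a1ij + (m:ℝ) * a2ij) * b1lm)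
            • R1 (i+l) (j+m)
        + (((i:ℝ) * a1lm + (j:ℝ) * a2lm) * b2ij - ((l:ℝ) * a1ij + (m:ℝ) * a2ij) * b2lm)
            • R2 (i+l) (j+m)) := by
  simp only [smul_P_add_smul_R_eq_diag, vBr_diag_mon, real_smul_diag]
  congr 1
  funext k
  fin_cases k <;>
  · simp
    ring
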